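/- Define functions g_k : ℝ → ℝ recursively by g_0(x) = x and g_{k+1}(x) = (x/(1−x))·g_k'(x), where g_k' denotes the derivative of g_k. Then for every nonnegative integer k and every real x with 0 < x < 1, the series ∑_{D=1}^{∞} (D^{D+k−1}/D!)·(x·e^{−x})^D converges and its sum equals g_k(x). -/

import Mathlib

/-!
Let `T_k(z) = ∑_{D ≥ 1} D^(D+k-1) z^D / D!`. Since `D^D / D! ≤ e^D`, the series converges for
`|z| < 1/e`, and `z = x e^(-x)` lies there when `0 ≤ x < 1`. Termwise differentiation gives
`z T_k'(z) = T_{k+1}(z)`, and as `d/dx (x e^(-x)) = (1 - x) e^(-x)`, the chain rule turns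
`(x/(1-x)) d/dx` into `z d/dz`. Hence `g_k(x) = T_k(x e^(-x))` by induction on `k`, once
`T_0(x e^(-x)) = x`.

For small `x`, expand each `e^(-Dx)` and regroup the absolutely convergent double series by total
degree in `x`: up to a factor `(-1)^N / (N+1)!`, the coefficient of `x^(N+1)` is the `(N+1)`-st
finite difference of `j ↦ j^N` at `0`, which vanishes for `N ≥ 1`. Both sides are analytic on
`(0, 1)`, so the identity theorem extends the equation to all of it.
-/

/-- `gfun 0 x = x` and `gfun (k+1) x = (x/(1−x))·(gfun k)'(x)`: the operator
`(x/(1−x))·d/dx` applied `k` times to the function `x`. -/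
noncomputable def gfun : ℕ → ℝ → ℝ
  | 0 => fun x => x
  | k + 1 => fun x => x / (1 - x) * deriv (gfun k) x

open Finset Real

theorem sum_range_neg_one_pow_mul_choose_mul_pow_of_lt {R : Type*} [CommRing R] {j n : ℕ}
    (h : j < n) : ∑ k ∈ range (n + 1), (-1 : R) ^ (n - k) * n.choose k * (k : R) ^ j = 0 := by
  have := congr_fun (fwdDiff_iter_pow_eq_zero_of_lt (R := R) h) 0
  rw [fwdDiff_iter_eq_sum_shift] at this
  simpa [zsmul_eq_mul] using this

theorem HasSum.sum_antidiagonal {α : Type*} [AddCommMonoid α] [TopologicalSpace α]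
    [ContinuousAdd α] [RegularSpace α] {f : ℕ × ℕ → α} {a : α} (hf : HasSum f a) :
    HasSum (fun n ↦ ∑ p ∈ antidiagonal n, f p) a :=
  (HasAntidiagonal.sigmaAntidiagonalEquivProd.hasSum_iff.mpr hf).sigma fun n ↦ by
    rw [← sum_coe_sort]
    exact hasSum_fintype _

theorem summable_add_one_pow_mul_geometric (k : ℕ) {r : ℝ} (hr : ‖r‖ < 1) :
    Summable fun n : ℕ ↦ ((n : ℝ) + 1) ^ k * r ^ n := by
  simp_rw [add_pow, one_pow, mul_one, sum_mul]
  refine summable_sum fun i _ ↦ ?_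
  simpa [mul_assoc, mul_comm, mul_left_comm] using
    (summable_pow_mul_geometric_of_norm_lt_one i (r := r) hr).mul_left (k.choose i : ℝ)

theorem abs_mul_exp_neg_lt_exp_neg_one {x : ℝ} (hx0 : 0 ≤ x) (hx1 : x ≠ 1) :
    |x * exp (-x)| < exp (-1) := by
  have hx : x - 1 + 1 < exp (x - 1) := add_one_lt_exp (sub_ne_zero.mpr hx1)
  calc |x * exp (-x)| = x * exp (-x) := abs_of_nonneg (by positivity)
    _ < exp (x - 1) * exp (-x) := by gcongr; linarith
    _ = exp (-1) := by rw [← exp_add]; ring_nf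

-- `treeCoeff k n` is the coefficient `D^(D+k-1) / D!` of `z^D`, with `D = n + 1`.
noncomputable def treeCoeff (k n : ℕ) : ℝ := ((n + 1 : ℕ) ^ (n + k) / (n + 1).factorial : ℝ)

noncomputable def treeSeries (k : ℕ) (z : ℝ) : ℝ := ∑' n, treeCoeff k n * z ^ (n + 1)

theorem treeCoeff_nonneg (k n : ℕ) : 0 ≤ treeCoeff k n := by
  unfold treeCoeff; positivity

theorem treeCoeff_succ (k n : ℕ) : treeCoeff (k + 1) n = (n + 1) * treeCoeff k n := by
  simp only [treeCoeff, ← add_assoc, pow_succ]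
  push_cast
  ring

theorem treeCoeff_le (k n : ℕ) : treeCoeff k n ≤ ((n : ℝ) + 1) ^ k * exp 1 ^ (n + 1) := by
  have hexp := pow_div_factorial_le_exp ((n : ℝ) + 1) (by positivity) (n + 1)
  rw [← exp_nat_mul, mul_one]
  calc treeCoeff k n ≤ treeCoeff (k + 1) n := by
        rw [treeCoeff_succ]
        nlinarith [treeCoeff_nonneg k n, (n.cast_nonneg : (0 : ℝ) ≤ n)]
    _ = ((n : ℝ) + 1) ^ k * (((n : ℝ) + 1) ^ (n + 1) / (n + 1).factorial) := by
        simp only [treeCoeff]; push_cast; ring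
    _ ≤ ((n : ℝ) + 1) ^ k * exp ((n + 1 : ℕ)) := by push_cast; gcongr

theorem summable_treeCoeff_mul_pow (k : ℕ) {z : ℝ} (hz : |z| < exp (-1)) :
    Summable fun n ↦ treeCoeff k n * z ^ n := by
  have hr : ‖exp 1 * |z|‖ < 1 := by
    calc ‖exp 1 * |z|‖ = exp 1 * |z| := norm_of_nonneg (by positivity)
      _ < exp 1 * exp (-1) := by gcongr
      _ = 1 := by rw [← exp_add]; norm_num
  refine .of_norm_bounded ((summable_add_one_pow_mul_geometric k hr).mul_left (exp 1)) fun n ↦ ?_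
  rw [norm_mul, norm_pow, norm_of_nonneg (treeCoeff_nonneg k n), Real.norm_eq_abs]
  calc treeCoeff k n * |z| ^ n ≤ ((n : ℝ) + 1) ^ k * exp 1 ^ (n + 1) * |z| ^ n := by
        gcongr; exact treeCoeff_le k n
    _ = exp 1 * (((n : ℝ) + 1) ^ k * (exp 1 * |z|) ^ n) := by ring

theorem treeSeries_eq_mul_tsum (k : ℕ) (z : ℝ) :
    treeSeries k z = z * ∑' n, treeCoeff k n * z ^ n := by
  rw [treeSeries, ← tsum_mul_left]
  congr 1 with n
  ring

theorem summable_treeSeries (k : ℕ) {z : ℝ} (hz : |z| < exp (-1)) :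
    Summable fun n ↦ treeCoeff k n * z ^ (n + 1) := by
  simpa only [pow_succ, mul_assoc] using (summable_treeCoeff_mul_pow k hz).mul_right z

theorem hasDerivAt_treeSeries (k : ℕ) {z : ℝ} (hz : |z| < exp (-1)) :
    HasDerivAt (treeSeries k) (∑' n, treeCoeff (k + 1) n * z ^ n) z := by
  obtain ⟨q, hzq, hq⟩ := exists_between hz
  have hq0 : 0 < q := (abs_nonneg z).trans_lt hzq
  have hz_mem : z ∈ Set.Ioo (-q) q := ⟨neg_lt_of_abs_lt hzq, lt_of_abs_lt hzq⟩
  have hterm (n : ℕ) (y : ℝ) :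
      HasDerivAt (fun y ↦ treeCoeff k n * y ^ (n + 1)) (treeCoeff (k + 1) n * y ^ n) y := by
    simpa [treeCoeff_succ, mul_assoc, mul_comm, mul_left_comm] using
      (hasDerivAt_pow (n + 1) y).const_mul (treeCoeff k n)
  have hbound (n : ℕ) (y : ℝ) (hy : y ∈ Set.Ioo (-q) q) :
      ‖treeCoeff (k + 1) n * y ^ n‖ ≤ treeCoeff (k + 1) n * q ^ n := by
    rw [norm_mul, norm_pow, norm_of_nonneg (treeCoeff_nonneg _ n), Real.norm_eq_abs]
    gcongr
    · exact treeCoeff_nonneg _ n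
    · exact (abs_lt.mpr hy).le
  exact hasDerivAt_tsum_of_isPreconnected
    (summable_treeCoeff_mul_pow (k + 1) (by rwa [abs_of_pos hq0])) isOpen_Ioo isPreconnected_Ioo
    (fun n y _ ↦ hterm n y) hbound hz_mem (summable_treeSeries k hz) hz_mem

theorem analyticAt_treeSeries (k : ℕ) {z : ℝ} (hz : |z| < exp (-1)) :
    AnalyticAt ℝ (treeSeries k) z := by
  set p := FormalMultilinearSeries.ofScalars ℝ (treeCoeff k)
  obtain ⟨q, hzq, hq⟩ := exists_between hz
  lift q to NNReal using (abs_nonneg z).trans hzq.le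
  have hq_le : (q : ENNReal) ≤ p.radius := by
    refine p.le_radius_of_summable_norm ?_
    simpa [p, FormalMultilinearSeries.ofScalars_norm, norm_of_nonneg (treeCoeff_nonneg k _)]
      using summable_treeCoeff_mul_pow k (z := q) (by rwa [NNReal.abs_eq])
  have hz_mem : z ∈ Metric.eball (0 : ℝ) p.radius := by
    rw [Metric.mem_eball, edist_dist, dist_zero_right, Real.norm_eq_abs]
    refine lt_of_lt_of_le ?_ hq_le
    rw [← ENNReal.ofReal_coe_nnreal]
    exact (ENNReal.ofReal_lt_ofReal_iff_of_nonneg (abs_nonneg z)).mpr hzq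
  have hsum : treeSeries k = fun z ↦ z * p.sum z := by
    ext z
    rw [treeSeries_eq_mul_tsum, ← FormalMultilinearSeries.ofScalarsSum,
      FormalMultilinearSeries.ofScalars_sum_eq]
    simp
  rw [hsum]
  exact analyticAt_id.mul
    ((p.hasFPowerSeriesOnBall (pos_of_gt hz_mem)).analyticAt_of_mem hz_mem)

theorem treeCoeff_zero_mul_pow_div_factorial {N D : ℕ} (hD : D ≤ N) :
    treeCoeff 0 D * ((-((D : ℝ) + 1)) ^ (N - D) / (N - D).factorial) =
      ((N + 1).factorial : ℝ)⁻¹ *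
        ((-1) ^ (N + 1 - (D + 1)) * (N + 1).choose (D + 1) * ((D + 1 : ℕ) : ℝ) ^ N) := by
  have hpow : ((D : ℝ) + 1) ^ D * ((D : ℝ) + 1) ^ (N - D) = ((D : ℝ) + 1) ^ N := by
    rw [← pow_add, Nat.add_sub_cancel' hD]
  rw [Nat.cast_choose ℝ (by omega : D + 1 ≤ N + 1), Nat.add_sub_add_right, neg_pow, treeCoeff]
  push_cast
  rw [add_zero, ← hpow]
  field_simp

theorem sum_antidiagonal_treeCoeff_zero_mul_pow_div_factorial (N : ℕ) :
    ∑ p ∈ antidiagonal N, treeCoeff 0 p.1 * ((-((p.1 : ℝ) + 1)) ^ p.2 / p.2.factorial) =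
      if N = 0 then 1 else 0 := by
  rcases Nat.eq_zero_or_pos N with rfl | hN
  · simp [treeCoeff]
  have halt := sum_range_neg_one_pow_mul_choose_mul_pow_of_lt (R := ℝ) (Nat.lt_succ_self N)
  rw [sum_range_succ', Nat.cast_zero, zero_pow hN.ne', mul_zero, add_zero] at halt
  rw [Nat.sum_antidiagonal_eq_sum_range_succ_mk, if_neg hN.ne',
    sum_congr rfl fun D hD ↦
      treeCoeff_zero_mul_pow_div_factorial (Nat.lt_succ_iff.mp (mem_range.mp hD)),
    ← mul_sum, halt, mul_zero]

theorem hasSum_pow_succ_mul_exp_series (D : ℕ) (y s : ℝ) :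
    HasSum (fun m : ℕ ↦ y ^ (D + 1) * ((((D : ℝ) + 1) * s) ^ m / m.factorial))
      ((y * exp s) ^ (D + 1)) := by
  have hexp_pow : exp ((D + 1) * s) = exp s ^ (D + 1) := by
    rw [← exp_nat_mul]; push_cast; ring_nf
  have hexp :
      HasSum (fun m : ℕ ↦ (((D : ℝ) + 1) * s) ^ m / m.factorial) (exp ((D + 1) * s)) := by
    rw [exp_eq_exp_ℝ]; exact NormedSpace.expSeries_div_hasSum_exp _
  rw [mul_pow, ← hexp_pow]
  exact hexp.mul_left _

theorem treeSeries_zero_mul_exp_neg_of_abs_mul_exp_lt {x : ℝ} (hx : |x| * exp |x| < exp (-1)) :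
    treeSeries 0 (x * exp (-x)) = x := by
  set A : ℕ × ℕ → ℝ := fun p ↦
    treeCoeff 0 p.1 * (x ^ (p.1 + 1) * ((((p.1 : ℝ) + 1) * -x) ^ p.2 / p.2.factorial))
    with hA_def
  have hrow (D : ℕ) (y s : ℝ) : HasSum
      (fun m : ℕ ↦ treeCoeff 0 D * (y ^ (D + 1) * ((((D : ℝ) + 1) * s) ^ m / m.factorial)))
      (treeCoeff 0 D * (y * exp s) ^ (D + 1)) :=
    (hasSum_pow_succ_mul_exp_series D y s).mul_left _
  have habs_row (D : ℕ) :
      HasSum (fun m ↦ |A (D, m)|) (treeCoeff 0 D * (|x| * exp |x|) ^ (D + 1)) := by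
    convert hrow D |x| |x| using 2 with m
    simp only [hA_def, abs_mul, abs_div, abs_pow, abs_neg, Nat.abs_cast,
      abs_of_nonneg (treeCoeff_nonneg 0 D), abs_of_nonneg (by positivity : (0 : ℝ) ≤ D + 1)]
  have hA : Summable A := by
    refine summable_abs_iff.mp ((summable_prod_of_nonneg fun _ ↦ abs_nonneg _).mpr
      ⟨fun D ↦ (habs_row D).summable, ?_⟩)
    simp only [fun D ↦ (habs_row D).tsum_eq]
    exact summable_treeSeries 0 (by rwa [abs_of_nonneg (by positivity)])
  have hdiag (N : ℕ) : ∑ p ∈ antidiagonal N, A p = if N = 0 then x else 0 := by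
    have hterm : ∀ p ∈ antidiagonal N, A p =
        x ^ (N + 1) * (treeCoeff 0 p.1 * ((-((p.1 : ℝ) + 1)) ^ p.2 / p.2.factorial)) := by
      rintro ⟨D, m⟩ hp
      rw [HasAntidiagonal.mem_antidiagonal] at hp
      simp only [hA_def, ← hp, mul_neg, ← neg_mul, mul_pow, pow_add]
      ring
    rw [sum_congr rfl hterm, ← mul_sum, sum_antidiagonal_treeCoeff_zero_mul_pow_div_factorial]
    split_ifs with hN <;> simp [hN]
  obtain ⟨S, hS⟩ := hA
  have hSx : S = x := by
    have hsum := hS.sum_antidiagonal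
    rw [funext hdiag] at hsum
    exact hsum.unique (hasSum_ite_eq 0 x)
  have hrows : HasSum (fun D ↦ treeCoeff 0 D * (x * exp (-x)) ^ (D + 1)) S :=
    hS.prod_fiberwise fun D ↦ hrow D x (-x)
  rw [treeSeries, hrows.tsum_eq, hSx]

theorem treeSeries_zero_mul_exp_neg {x : ℝ} (hx : x ∈ Set.Ioo 0 1) :
    treeSeries 0 (x * exp (-x)) = x := by
  have hanalytic : AnalyticOnNhd ℝ (fun y ↦ treeSeries 0 (y * exp (-y))) (Set.Ioo 0 1) :=
    fun y hy ↦ (analyticAt_treeSeries 0 (abs_mul_exp_neg_lt_exp_neg_one hy.1.le hy.2.ne)).comp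
      (f := fun y ↦ y * exp (-y)) (by fun_prop)
  refine hanalytic.eqOn_of_preconnected_of_eventuallyEq analyticOnNhd_id isPreconnected_Ioo
    (z₀ := 1 / 20) (by norm_num) ?_ hx
  filter_upwards [Ioo_mem_nhds (by norm_num : (0 : ℝ) < 1 / 20)
    (by norm_num : (1 / 20 : ℝ) < 1 / 10)] with y hy
  refine treeSeries_zero_mul_exp_neg_of_abs_mul_exp_lt ?_
  -- `y e^y < e / 10 < 1 / e` because `e^2 < 10`.
  have he : exp 1 * exp (-1) = 1 := by rw [← exp_add]; norm_num
  have hey : exp y < exp 1 := exp_lt_exp.mpr (by linarith [hy.2])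
  rw [abs_of_pos hy.1]
  nlinarith [exp_one_lt_three, exp_pos (-1), exp_pos y, hy.1, hy.2]

theorem treeSeries_mul_exp_neg_eq_gfun (k : ℕ) {x : ℝ} (hx : x ∈ Set.Ioo 0 1) :
    treeSeries k (x * exp (-x)) = gfun k x := by
  induction k generalizing x with
  | zero => exact treeSeries_zero_mul_exp_neg hx
  | succ k ih =>
    have hz := abs_mul_exp_neg_lt_exp_neg_one hx.1.le hx.2.ne
    have hinner : HasDerivAt (fun y ↦ y * exp (-y)) ((1 - x) * exp (-x)) x :=
      ((hasDerivAt_id' x).mul (hasDerivAt_neg x).exp).congr_deriv (by ring)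
    have heq : (fun y ↦ treeSeries k (y * exp (-y))) =ᶠ[nhds x] gfun k :=
      Filter.eventually_of_mem (Ioo_mem_nhds hx.1 hx.2) fun y hy ↦ ih hy
    have hderiv := ((hasDerivAt_treeSeries k hz).comp x hinner).congr_of_eventuallyEq heq.symm
    have hx1 : 1 - x ≠ 0 := sub_ne_zero.mpr hx.2.ne'
    show _ = x / (1 - x) * deriv (gfun k) x
    rw [hderiv.deriv, treeSeries_eq_mul_tsum]
    field_simp

/-- for every `k ≥ 0` and `0 < x < 1`, the series
`∑_{D=1}^∞ (D^{D+k−1}/D!)·(x·e^{−x})^D` converges with sum `gfun k x`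
(indexed by `n : ℕ` with `D = n+1`, so the exponent `D + k − 1` is `n + k`). -/
theorem stmt13 (k : ℕ) (x : ℝ) (hx0 : 0 < x) (hx1 : x < 1) :
    HasSum
      (fun n : ℕ =>
        ((n + 1 : ℕ) ^ (n + k) / (n + 1).factorial : ℝ) * (x * Real.exp (-x)) ^ (n + 1))
      (gfun k x) := by
  have hsum := (summable_treeSeries k (abs_mul_exp_neg_lt_exp_neg_one hx0.le hx1.ne)).hasSum
  rwa [← treeSeries, treeSeries_mul_exp_neg_eq_gfun k ⟨hx0, hx1⟩] at hsum
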